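/- Let ψ_0, ψ_1: ℝ^m → ℝ be smooth ℤ^m-periodic functions with I + Hess ψ_i > 0, and set φ_i(y) = 2πy² + 4πψ_i(y). Let u_t = (1-t)u_0 + tu_1 with u_i the Legendre transform of φ_i, and φ_t = Legendre inverse of u_t. Then for each t ∈ [0,1], φ_t(y) - 2πy² is smooth and ℤ^m-periodic, and I + Hess(φ_t - 2πy²)/4π > 0; i.e. the Legendre-linearized geodesic stays in the space H_0^Γ of Γ-invariant Kähler potentials. -/

import Mathlib

open scoped Real BigOperators

/-- The gradient of a function on `ℝ^m`. -/
noncomputable def grad {m : ℕ} (f : (Fin m → ℝ) → ℝ) (y : Fin m → ℝ) : Fin m → ℝ :=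
  fun i => fderiv ℝ f y (Pi.single i 1)

/-- The Hessian matrix of a function on `ℝ^m`. -/
noncomputable def hess {m : ℕ} (f : (Fin m → ℝ) → ℝ) (y : Fin m → ℝ) :
    Matrix (Fin m) (Fin m) ℝ :=
  Matrix.of fun a b =>
    fderiv ℝ (fun v => fderiv ℝ f v (Pi.single b 1)) y (Pi.single a 1)

namespace Geo

open Set Function

variable {m : ℕ}




/-- dot product on `Fin m → ℝ`. -/
def dot (a b : Fin m → ℝ) : ℝ := ∑ i, a i * b i

lemma dot_comm (a b : Fin m → ℝ) : dot a b = dot b a :=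
  Finset.sum_congr rfl fun i _ => mul_comm _ _

lemma dot_sub_left (a b c : Fin m → ℝ) : dot (a - b) c = dot a c - dot b c := by
  simp [dot, sub_mul, Finset.sum_sub_distrib]

lemma dot_sub_right (a b c : Fin m → ℝ) : dot a (b - c) = dot a b - dot a c := by
  simp [dot, mul_sub, Finset.sum_sub_distrib]

lemma eq_sum_single (w : Fin m → ℝ) :
    w = ∑ i, w i • (Pi.single i (1:ℝ) : Fin m → ℝ) := by
  funext j
  simp [Finset.sum_apply, Pi.single_apply]

lemma clm_eq_sum' {V : Type*} [NormedAddCommGroup V] [NormedSpace ℝ V]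
    (L : (Fin m → ℝ) →L[ℝ] V) (w : Fin m → ℝ) :
    L w = ∑ i, w i • L (Pi.single i 1) := by
  conv_lhs => rw [eq_sum_single w]
  rw [map_sum]
  exact Finset.sum_congr rfl fun i _ => by rw [map_smul]

lemma clm_eq_sum (L : (Fin m → ℝ) →L[ℝ] ℝ) (w : Fin m → ℝ) :
    L w = ∑ i, w i * L (Pi.single i 1) := by
  rw [clm_eq_sum' L w]; rfl

lemma fderiv_apply_eq_dot (f : (Fin m → ℝ) → ℝ) (y w : Fin m → ℝ) :
    fderiv ℝ f y w = dot w (grad f y) :=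
  clm_eq_sum _ w

lemma htop : (((⊤ : ℕ∞) : WithTop ℕ∞) + 1 ≤ ((⊤ : ℕ∞) : WithTop ℕ∞)) := by
  exact_mod_cast (le_top : (⊤ : ℕ∞) + 1 ≤ ⊤)

lemma contDiff_grad {f : (Fin m → ℝ) → ℝ} (hf : ContDiff ℝ (⊤ : ℕ∞) f) :
    ContDiff ℝ (⊤ : ℕ∞) (grad f) := by
  apply contDiff_pi.2
  intro i
  exact (ContinuousLinearMap.apply ℝ ℝ (Pi.single i 1)).contDiff.comp (hf.fderiv_right htop)

lemma hess_eq {f : (Fin m → ℝ) → ℝ} (hf : ContDiff ℝ (⊤ : ℕ∞) f) (y : Fin m → ℝ) (a b : Fin m) :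
    hess f y a b = fderiv ℝ (fderiv ℝ f) y (Pi.single a 1) (Pi.single b 1) := by
  have hdf : DifferentiableAt ℝ (fderiv ℝ f) y :=
    ((hf.fderiv_right htop).differentiable (by simp)) y
  have h1 : HasFDerivAt (fun v => fderiv ℝ f v (Pi.single b 1))
      ((ContinuousLinearMap.apply ℝ ℝ (Pi.single b 1)).comp (fderiv ℝ (fderiv ℝ f) y)) y := by
    exact (ContinuousLinearMap.apply ℝ ℝ (Pi.single b 1)).hasFDerivAt.comp y hdf.hasFDerivAt
  show fderiv ℝ (fun v => fderiv ℝ f v (Pi.single b 1)) y (Pi.single a 1) = _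
  rw [h1.fderiv]
  rfl


/-- quadratic form of the hessian -/
lemma snd_fderiv_quadform {f : (Fin m → ℝ) → ℝ} (hf : ContDiff ℝ (⊤ : ℕ∞) f) (x v : Fin m → ℝ) :
    fderiv ℝ (fderiv ℝ f) x v v = ∑ a, ∑ b, v a * v b * hess f x a b := by
  rw [clm_eq_sum' (fderiv ℝ (fderiv ℝ f) x) v]
  rw [ContinuousLinearMap.coe_sum', Finset.sum_apply]
  refine Finset.sum_congr rfl fun a _ => ?_
  rw [ContinuousLinearMap.coe_smul', Pi.smul_apply, smul_eq_mul]
  rw [clm_eq_sum (fderiv ℝ (fderiv ℝ f) x (Pi.single a 1)) v]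
  rw [Finset.mul_sum]
  refine Finset.sum_congr rfl fun b _ => ?_
  rw [hess_eq hf x a b]; ring

lemma quadform_pos {f : (Fin m → ℝ) → ℝ} {x v : Fin m → ℝ} (hpos : (hess f x).PosDef)
    (hv : v ≠ 0) : 0 < ∑ a, ∑ b, v a * v b * hess f x a b := by
  have := hpos.dotProduct_mulVec_pos hv
  rw [star_trivial] at this
  refine lt_of_lt_of_eq this ?_
  have h2 : dotProduct v ((hess f x).mulVec v) = ∑ a, ∑ b, v a * (hess f x a b * v b) := by
    simp [dotProduct, Matrix.mulVec, Finset.mul_sum]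
  rw [h2]
  exact Finset.sum_congr rfl fun a _ => Finset.sum_congr rfl fun b _ => by ring

lemma hasDerivAt_line {f : (Fin m → ℝ) → ℝ} (hf : ContDiff ℝ (⊤ : ℕ∞) f) (y v : Fin m → ℝ) (s : ℝ) :
    HasDerivAt (fun s : ℝ => f (y + s • v)) (fderiv ℝ f (y + s • v) v) s := by
  have hline : HasDerivAt (fun s : ℝ => y + s • v) v s := by
    simpa using ((hasDerivAt_id s).smul_const v).const_add y
  have hd : DifferentiableAt ℝ f (y + s • v) := (hf.differentiable (by simp)) _
  exact (hd.hasFDerivAt.comp_hasDerivAt s hline)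

lemma hasDerivAt_line' {f : (Fin m → ℝ) → ℝ} (hf : ContDiff ℝ (⊤ : ℕ∞) f) (y v : Fin m → ℝ) (s : ℝ) :
    HasDerivAt (fun s : ℝ => fderiv ℝ f (y + s • v) v)
      (∑ a, ∑ b, v a * v b * hess f (y + s • v) a b) s := by
  have hline : HasDerivAt (fun s : ℝ => y + s • v) v s := by
    simpa using ((hasDerivAt_id s).smul_const v).const_add y
  have hdf : DifferentiableAt ℝ (fderiv ℝ f) (y + s • v) :=
    ((hf.fderiv_right htop).differentiable (by simp)) _
  have h1 : HasDerivAt (fun s : ℝ => fderiv ℝ f (y + s • v))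
      (fderiv ℝ (fderiv ℝ f) (y + s • v) v) s :=
    hdf.hasFDerivAt.comp_hasDerivAt s hline
  have h2 := (ContinuousLinearMap.apply ℝ ℝ v).hasFDerivAt.comp_hasDerivAt s h1
  have h3 : HasDerivAt (fun s : ℝ => fderiv ℝ f (y + s • v) v)
      (fderiv ℝ (fderiv ℝ f) (y + s • v) v v) s := h2
  rw [snd_fderiv_quadform hf (y + s • v) v] at h3
  exact h3



lemma fenchel_strict {f : (Fin m → ℝ) → ℝ} (hf : ContDiff ℝ (⊤ : ℕ∞) f)
    (hpos : ∀ x, (hess f x).PosDef) {y z : Fin m → ℝ} (hyz : y ≠ z) :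
    f y + dot (grad f y) (z - y) < f z := by
  set v := z - y with hv
  have hv0 : v ≠ 0 := sub_ne_zero.2 (Ne.symm hyz)
  set g' : ℝ → ℝ := fun s => fderiv ℝ f (y + s • v) v with hg'def
  have hg : ∀ s : ℝ, HasDerivAt (fun s : ℝ => f (y + s • v)) (g' s) s :=
    fun s => hasDerivAt_line hf y v s
  have hmono : StrictMono g' := by
    apply strictMono_of_deriv_pos
    intro s
    rw [(hasDerivAt_line' hf y v s).deriv]
    exact quadform_pos (hpos _) hv0
  obtain ⟨c, hc, hceq⟩ := exists_hasDerivAt_eq_slope (fun s : ℝ => f (y + s • v)) g'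
    one_pos (fun s _ => (hg s).continuousAt.continuousWithinAt) (fun s _ => hg s)
  have h0 : g' 0 = dot (grad f y) (z - y) := by
    rw [hg'def]
    simp only [zero_smul, add_zero]
    rw [fderiv_apply_eq_dot]
    exact dot_comm _ _
  have h1 : f (y + (1:ℝ) • v) = f z := by rw [hv]; norm_num
  have h00 : f (y + (0:ℝ) • v) = f y := by norm_num
  rw [h1, h00] at hceq
  have hlt : g' 0 < g' c := hmono hc.1
  rw [h0] at hlt
  rw [hceq] at hlt
  have : (f z - f y) / (1 - 0) = f z - f y := by norm_num
  rw [this] at hlt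
  linarith

lemma grad_strictMono {f : (Fin m → ℝ) → ℝ} (hf : ContDiff ℝ (⊤ : ℕ∞) f)
    (hpos : ∀ x, (hess f x).PosDef) {y z : Fin m → ℝ} (hyz : y ≠ z) :
    0 < dot (grad f z - grad f y) (z - y) := by
  have h1 := fenchel_strict hf hpos hyz
  have h2 := fenchel_strict hf hpos (Ne.symm hyz)
  have h3 : dot (grad f z) (y - z) + dot (grad f z) (z - y) = 0 := by
    rw [dot, dot, ← Finset.sum_add_distrib]
    apply Finset.sum_eq_zero
    intro i _
    simp only [Pi.sub_apply]
    ring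
  rw [dot_sub_left]
  linarith

lemma grad_injective {f : (Fin m → ℝ) → ℝ} (hf : ContDiff ℝ (⊤ : ℕ∞) f)
    (hpos : ∀ x, (hess f x).PosDef) : Function.Injective (grad f) := by
  intro y z h
  by_contra hyz
  have := grad_strictMono hf hpos hyz
  rw [h, sub_self] at this
  simp [dot] at this

lemma fderiv_grad_apply {f : (Fin m → ℝ) → ℝ} (hf : ContDiff ℝ (⊤ : ℕ∞) f) (y : Fin m → ℝ)
    (a b : Fin m) : fderiv ℝ (grad f) y (Pi.single a 1) b = hess f y a b := by
  have hdg : DifferentiableAt ℝ (grad f) y := (contDiff_grad hf).differentiable (by simp) y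
  have h1 : HasFDerivAt (fun v => grad f v b)
      ((ContinuousLinearMap.proj b).comp (fderiv ℝ (grad f) y)) y := by
    exact (ContinuousLinearMap.proj b).hasFDerivAt.comp y hdg.hasFDerivAt
  have h2 : fderiv ℝ (fun v => grad f v b) y (Pi.single a 1)
      = fderiv ℝ (grad f) y (Pi.single a 1) b := by
    rw [h1.fderiv]; rfl
  rw [← h2]
  rfl

lemma clm_bijective_of_posdef {K : (Fin m → ℝ) →L[ℝ] (Fin m → ℝ)}
    (h : (Matrix.of fun a b => K (Pi.single a 1) b).PosDef) : Function.Bijective K := by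
  have hinj : Function.Injective K := by
    rw [injective_iff_map_eq_zero]
    intro w hw
    by_contra hw0
    have hq := h.dotProduct_mulVec_pos hw0
    rw [star_trivial] at hq
    have hKw : ∀ i, K w i = ∑ a, w a * K (Pi.single a 1) i := by
      intro i
      rw [clm_eq_sum' K w]
      simp [Finset.sum_apply]
    have hzero : dotProduct w ((Matrix.of fun a b => K (Pi.single a 1) b).mulVec w) = 0 := by
      calc dotProduct w ((Matrix.of fun a b => K (Pi.single a 1) b).mulVec w)
          = ∑ i, ∑ a, w a * (w i * K (Pi.single i 1) a) := by
            simp only [dotProduct, Matrix.mulVec, Matrix.of_apply, Finset.mul_sum]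
            exact Finset.sum_congr rfl fun i _ => Finset.sum_congr rfl fun a _ => by ring
        _ = ∑ a, ∑ i, w a * (w i * K (Pi.single i 1) a) := Finset.sum_comm
        _ = ∑ a, w a * K w a := by
            refine Finset.sum_congr rfl fun a _ => ?_
            rw [hKw a, Finset.mul_sum]
        _ = 0 := by simp [hw]
    rw [hzero] at hq
    exact lt_irrefl 0 hq
  have hsurj : Function.Surjective K := by
    have := (LinearMap.injective_iff_surjective
      (f := (K : (Fin m → ℝ) →ₗ[ℝ] (Fin m → ℝ)))).1 hinj
    exact this
  exact ⟨hinj, hsurj⟩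

lemma matrix_of_comp {K P : (Fin m → ℝ) →L[ℝ] (Fin m → ℝ)}
    (h : K.comp P = ContinuousLinearMap.id ℝ (Fin m → ℝ)) :
    (Matrix.of fun a b => P (Pi.single a 1) b) * (Matrix.of fun a b => K (Pi.single a 1) b) = 1 := by
  ext a b
  rw [Matrix.mul_apply, Matrix.one_apply]
  have h1 : K (P (Pi.single a 1)) = Pi.single a 1 := by
    rw [← ContinuousLinearMap.comp_apply, h]; rfl
  have h2 : K (P (Pi.single a 1)) b = ∑ c, P (Pi.single a 1) c * K (Pi.single c 1) b := by
    rw [clm_eq_sum' K (P (Pi.single a 1))]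
    simp [Finset.sum_apply]
  have h3 : ∑ c, P (Pi.single a 1) c * K (Pi.single c 1) b = if a = b then 1 else 0 := by
    rw [← h2, h1, Pi.single_apply]
    by_cases hab : a = b <;> simp [hab, eq_comm]
  exact h3

lemma comb_pos {t a b : ℝ} (h0 : 0 ≤ t) (h1 : t ≤ 1) (ha : 0 < a) (hb : 0 < b) :
    0 < (1 - t) * a + t * b := by
  rcases eq_or_lt_of_le h0 with h | h
  · rw [← h]; simpa using ha
  · exact add_pos_of_nonneg_of_pos (mul_nonneg (by linarith) ha.le) (mul_pos h hb)

lemma posdef_of_mul_eq_one {A B : Matrix (Fin m) (Fin m) ℝ} (hA : A.PosDef)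
    (h2 : A * B = 1) : B.PosDef := by
  have hB : B = A⁻¹ := (Matrix.inv_eq_right_inv h2).symm
  rw [hB]
  exact hA.inv

lemma posdef_comb {A B : Matrix (Fin m) (Fin m) ℝ} (hA : A.PosDef) (hB : B.PosDef)
    {t : ℝ} (h0 : 0 ≤ t) (h1 : t ≤ 1) :
    Matrix.PosDef (Matrix.of fun a b => (1 - t) * A a b + t * B a b) := by
  have heq : (Matrix.of fun a b => (1 - t) * A a b + t * B a b) = (1 - t) • A + t • B := by
    ext a b; simp
  rw [heq]
  apply Matrix.PosDef.of_dotProduct_mulVec_pos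
  · have hh1 : ((1 - t) • A).IsHermitian := by
      unfold Matrix.IsHermitian
      rw [Matrix.conjTranspose_smul, star_trivial, hA.1]
    have hh2 : (t • B).IsHermitian := by
      unfold Matrix.IsHermitian
      rw [Matrix.conjTranspose_smul, star_trivial, hB.1]
    exact hh1.add hh2
  · intro x hx
    rw [star_trivial, Matrix.add_mulVec, Matrix.smul_mulVec, Matrix.smul_mulVec,
      dotProduct_add, dotProduct_smul, dotProduct_smul,
      smul_eq_mul, smul_eq_mul]
    have pa := hA.dotProduct_mulVec_pos hx; rw [star_trivial] at pa
    have pb := hB.dotProduct_mulVec_pos hx; rw [star_trivial] at pb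
    exact comb_pos h0 h1 pa pb



/-- package an invertible fderiv as a continuous linear equiv -/
lemma exists_equiv_fderiv {g : (Fin m → ℝ) → (Fin m → ℝ)} {x : Fin m → ℝ}
    (hd : Function.Bijective (fderiv ℝ g x)) :
    ∃ e : (Fin m → ℝ) ≃L[ℝ] (Fin m → ℝ), (e : (Fin m → ℝ) →L[ℝ] (Fin m → ℝ)) = fderiv ℝ g x := by
  have hbij : Function.Bijective ((fderiv ℝ g x : (Fin m → ℝ) →ₗ[ℝ] (Fin m → ℝ))) := hd
  refine ⟨(LinearEquiv.ofBijective _ hbij).toContinuousLinearEquiv, ?_⟩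
  ext w
  rfl

lemma isOpenMap_of_fderiv_bijective {g : (Fin m → ℝ) → (Fin m → ℝ)}
    (hg : ContDiff ℝ (⊤ : ℕ∞) g) (hd : ∀ x, Function.Bijective (fderiv ℝ g x)) : IsOpenMap g := by
  have : ∀ x, ∃ e : (Fin m → ℝ) ≃L[ℝ] (Fin m → ℝ),
      (e : (Fin m → ℝ) →L[ℝ] (Fin m → ℝ)) = fderiv ℝ g x := fun x => exists_equiv_fderiv (hd x)
  choose e he using this
  exact isOpenMap_of_hasStrictFDerivAt_equiv (f' := e) fun x =>
    hg.contDiffAt.hasStrictFDerivAt' (by rw [he x]; exact (hg.differentiable (by simp) x).hasFDerivAt)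
      (by simp)

lemma surjective_of_bound {g : (Fin m → ℝ) → (Fin m → ℝ)} (hcont : Continuous g)
    (hopen : IsOpenMap g) {C : ℝ} (hC : 0 < C) (hb : ∀ x, ‖x‖ ≤ C * (‖g x‖ + 1)) :
    Function.Surjective g := by
  have hclosed : closure (Set.range g) ⊆ Set.range g := by
    intro y hy
    set K := Metric.closedBall (0 : Fin m → ℝ) (C * (‖y‖ + 2)) with hK
    have hyK : y ∈ closure (g '' K) := by
      rw [Metric.mem_closure_iff] at hy ⊢
      intro ε hε
      obtain ⟨z, hz, hdz⟩ := hy (min ε 1) (lt_min hε one_pos)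
      obtain ⟨x, rfl⟩ := hz
      refine ⟨g x, ⟨x, ?_, rfl⟩, lt_of_lt_of_le hdz (min_le_left _ _)⟩
      have h1 : ‖g x‖ ≤ ‖y‖ + 1 := by
        have : dist y (g x) < 1 := lt_of_lt_of_le hdz (min_le_right _ _)
        have := norm_le_norm_add_norm_sub' (g x) y
        rw [dist_eq_norm] at *
        calc ‖g x‖ ≤ ‖y‖ + ‖g x - y‖ := norm_le_insert' _ _
          _ ≤ ‖y‖ + 1 := by
            rw [← norm_sub_rev y (g x)] at *
            linarith [this]
      have h2 : ‖x‖ ≤ C * (‖y‖ + 2) := le_trans (hb x) (by nlinarith)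
      simpa [hK, Metric.mem_closedBall, dist_eq_norm] using h2
    have hKc : IsCompact (g '' K) := (isCompact_closedBall _ _).image hcont
    have : y ∈ g '' K := hKc.isClosed.closure_subset hyK
    exact ⟨this.choose, this.choose_spec.2⟩
  have hco : IsClopen (Set.range g) := ⟨closure_subset_iff_isClosed.1 hclosed, hopen.isOpen_range⟩
  have : Set.range g = Set.univ := (isClopen_iff.1 hco).resolve_left (Set.range_nonempty g).ne_empty
  exact Set.range_eq_univ.1 this

lemma exists_smooth_inverse {g : (Fin m → ℝ) → (Fin m → ℝ)}
    (hg : ContDiff ℝ (⊤ : ℕ∞) g) (hinj : Function.Injective g) (hsurj : Function.Surjective g)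
    (hd : ∀ x, Function.Bijective (fderiv ℝ g x)) :
    ∃ g' : (Fin m → ℝ) → (Fin m → ℝ), ContDiff ℝ (⊤ : ℕ∞) g' ∧ (∀ x, g' (g x) = x) ∧
      ∀ z, g (g' z) = z := by
  classical
  have hleft : ∀ x, Function.invFun g (g x) = x := fun x => hinj (invFun_eq ⟨x, rfl⟩)
  have hright : ∀ z, g (Function.invFun g z) = z := fun z => invFun_eq (hsurj z)
  refine ⟨Function.invFun g, ?_, hleft, hright⟩
  rw [contDiff_iff_contDiffAt]
  intro z
  obtain ⟨x, rfl⟩ := hsurj z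
  obtain ⟨e, he⟩ := exists_equiv_fderiv (hd x)
  have hfd : HasFDerivAt g (e : (Fin m → ℝ) →L[ℝ] (Fin m → ℝ)) x := by
    rw [he]; exact (hg.differentiable (by simp) x).hasFDerivAt
  have hS : HasStrictFDerivAt g (e : (Fin m → ℝ) →L[ℝ] (Fin m → ℝ)) x :=
    hg.contDiffAt.hasStrictFDerivAt' hfd (by simp)
  have hloc : ContDiffAt ℝ (⊤ : ℕ∞) (hg.contDiffAt.localInverse hfd (by simp)) (g x) :=
    hg.contDiffAt.to_localInverse hfd (by simp)
  have hev : Function.invFun g =ᶠ[nhds (g x)] hg.contDiffAt.localInverse hfd (by simp) := by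
    have h1 := hS.eventually_right_inverse
    refine h1.mono fun z hz => ?_
    conv_lhs => rw [← hz]
    exact hleft _
  exact hloc.congr_of_eventuallyEq hev



lemma grad_periodic {ψ : (Fin m → ℝ) → ℝ} (hψ : ContDiff ℝ (⊤ : ℕ∞) ψ)
    (hper : ∀ (y : Fin m → ℝ) (n : Fin m → ℤ), ψ (y + fun α => (n α : ℝ)) = ψ y)
    (y : Fin m → ℝ) (n : Fin m → ℤ) :
    grad ψ (y + fun α => (n α : ℝ)) = grad ψ y := by
  set nr : Fin m → ℝ := fun α => (n α : ℝ) with hnr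
  have hd : DifferentiableAt ℝ ψ (y + nr) := (hψ.differentiable (by simp)) _
  have h1 : HasFDerivAt (fun x => ψ (x + nr)) (fderiv ℝ ψ (y + nr)) y := by
    have := hd.hasFDerivAt.comp y ((hasFDerivAt_id y).add_const nr)
    exact this
  have h2 : (fun x => ψ (x + nr)) = ψ := funext fun x => hper x n
  rw [h2] at h1
  have h3 := h1.fderiv
  funext i
  show fderiv ℝ ψ (y + nr) (Pi.single i 1) = fderiv ℝ ψ y (Pi.single i 1)
  rw [← h3]

lemma grad_bounded {ψ : (Fin m → ℝ) → ℝ} (hψ : ContDiff ℝ (⊤ : ℕ∞) ψ)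
    (hper : ∀ (y : Fin m → ℝ) (n : Fin m → ℤ), ψ (y + fun α => (n α : ℝ)) = ψ y) :
    ∃ C : ℝ, 0 ≤ C ∧ ∀ y, ‖grad ψ y‖ ≤ C := by
  have hcont : Continuous (grad ψ) := (contDiff_grad hψ).continuous
  have hK : IsCompact (Set.Icc (0 : Fin m → ℝ) 1) := isCompact_Icc
  obtain ⟨C, hC⟩ := hK.exists_bound_of_continuousOn hcont.continuousOn
  refine ⟨max C 0, le_max_right _ _, fun y => ?_⟩
  set n : Fin m → ℤ := fun α => ⌊y α⌋ with hn
  set z : Fin m → ℝ := fun α => Int.fract (y α) with hz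
  have hyz : y = z + fun α => ((n α : ℝ)) := by
    funext α
    simp [hz, hn, Int.fract_add_floor]
  have hmem : z ∈ Set.Icc (0 : Fin m → ℝ) 1 := by
    constructor <;> intro α
    · exact Int.fract_nonneg _
    · exact (Int.fract_lt_one _).le
  have : grad ψ y = grad ψ z := by
    rw [hyz]; exact grad_periodic hψ hper z n
  rw [this]
  exact le_trans (hC z hmem) (le_max_left _ _)

/-- explicit gradient of `y ↦ c * ∑ (y α)^2 + d * ψ y` -/
lemma grad_quad_add {ψ : (Fin m → ℝ) → ℝ} (hψ : ContDiff ℝ (⊤ : ℕ∞) ψ)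
    {φ : (Fin m → ℝ) → ℝ} {c d : ℝ}
    (hφ : ∀ y, φ y = c * (∑ α, (y α) ^ 2) + d * ψ y) (y : Fin m → ℝ) :
    grad φ y = fun i => 2 * c * y i + d * grad ψ y i := by
  have hφfun : φ = fun y => c * (∑ α, (y α) ^ 2) + d * ψ y := funext hφ
  have hQ : HasFDerivAt (fun y : Fin m → ℝ => ∑ α, (y α) ^ 2)
      (∑ α, (2 * y α) • (ContinuousLinearMap.proj α : (Fin m → ℝ) →L[ℝ] ℝ)) y := by
    have h1 : ∀ α : Fin m, HasFDerivAt (fun y : Fin m → ℝ => (y α) ^ 2)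
        ((2 * y α) • (ContinuousLinearMap.proj α : (Fin m → ℝ) →L[ℝ] ℝ)) y := by
      intro α
      have hp := (ContinuousLinearMap.proj (R := ℝ) (φ := fun _ : Fin m => ℝ) α).hasFDerivAt
        (x := y)
      have hmul := hp.fun_mul hp
      have heq : (fun y : Fin m → ℝ => (ContinuousLinearMap.proj (R := ℝ)
          (φ := fun _ : Fin m => ℝ) α) y * (ContinuousLinearMap.proj (R := ℝ)
          (φ := fun _ : Fin m => ℝ) α) y) = fun y : Fin m → ℝ => (y α) ^ 2 := by
        funext v
        simp [sq]
      rw [heq] at hmul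
      refine hmul.congr_fderiv ?_
      ext w
      simp only [ContinuousLinearMap.add_apply, ContinuousLinearMap.smul_apply,
        ContinuousLinearMap.proj_apply, smul_eq_mul]
      ring
    exact HasFDerivAt.fun_sum fun α _ => h1 α
  have hψd : HasFDerivAt ψ (fderiv ℝ ψ y) y := (hψ.differentiable (by simp) y).hasFDerivAt
  have hφd : HasFDerivAt φ
      (c • (∑ α, (2 * y α) • (ContinuousLinearMap.proj α : (Fin m → ℝ) →L[ℝ] ℝ))
        + d • fderiv ℝ ψ y) y := by
    rw [hφfun]
    exact (hQ.const_mul c).add (hψd.const_mul d)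
  funext i
  show fderiv ℝ φ y (Pi.single i 1) = _
  rw [hφd.fderiv]
  simp only [ContinuousLinearMap.add_apply, ContinuousLinearMap.smul_apply,
    ContinuousLinearMap.coe_sum', Finset.sum_apply, ContinuousLinearMap.proj_apply,
    smul_eq_mul]
  have hsum : ∑ α, 2 * y α * (Pi.single i (1:ℝ) : Fin m → ℝ) α = 2 * y i := by
    rw [Finset.sum_eq_single i]
    · simp
    · intro b _ hb; simp [Pi.single_apply, hb]
    · intro h; exact absurd (Finset.mem_univ i) h
  rw [hsum]
  show c * (2 * y i) + d * grad ψ y i = _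
  ring



lemma hasFDerivAt_legendre {f : (Fin m → ℝ) → ℝ} {g' : (Fin m → ℝ) → (Fin m → ℝ)}
    (hf : ContDiff ℝ (⊤ : ℕ∞) f) (hg' : ContDiff ℝ (⊤ : ℕ∞) g') (hr : ∀ ν, grad f (g' ν) = ν)
    (ν : Fin m → ℝ) :
    HasFDerivAt (fun ν : Fin m → ℝ => (∑ i, ν i * g' ν i) - f (g' ν))
      (∑ i, g' ν i • (ContinuousLinearMap.proj i : (Fin m → ℝ) →L[ℝ] ℝ)) ν := by
  have hP : HasFDerivAt g' (fderiv ℝ g' ν) ν := (hg'.differentiable (by simp) ν).hasFDerivAt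
  have hterm : ∀ i : Fin m, HasFDerivAt (fun ν : Fin m → ℝ => ν i * g' ν i)
      ((fun ν : Fin m → ℝ => ν i) ν • ((ContinuousLinearMap.proj i).comp (fderiv ℝ g' ν))
        + (fun ν : Fin m → ℝ => g' ν i) ν •
          (ContinuousLinearMap.proj i : (Fin m → ℝ) →L[ℝ] ℝ)) ν := by
    intro i
    have h1 := (ContinuousLinearMap.proj (R := ℝ) (φ := fun _ : Fin m => ℝ) i).hasFDerivAt
      (x := ν)
    have h2 : HasFDerivAt (fun ν : Fin m → ℝ => g' ν i)
        ((ContinuousLinearMap.proj i).comp (fderiv ℝ g' ν)) ν := by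
      exact (ContinuousLinearMap.proj i).hasFDerivAt.comp ν hP
    exact h1.fun_mul h2
  have hsum := HasFDerivAt.fun_sum (fun i (_ : i ∈ Finset.univ) => hterm i)
  have hB : HasFDerivAt (fun ν : Fin m → ℝ => f (g' ν))
      ((fderiv ℝ f (g' ν)).comp (fderiv ℝ g' ν)) ν :=
    (hf.differentiable (by simp) _).hasFDerivAt.comp ν hP
  have htot := hsum.sub hB
  have hDeq : (∑ i, ((fun ν : Fin m → ℝ => ν i) ν •
        ((ContinuousLinearMap.proj i).comp (fderiv ℝ g' ν))
        + (fun ν : Fin m → ℝ => g' ν i) ν •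
          (ContinuousLinearMap.proj i : (Fin m → ℝ) →L[ℝ] ℝ)))
      - (fderiv ℝ f (g' ν)).comp (fderiv ℝ g' ν)
      = ∑ i, g' ν i • (ContinuousLinearMap.proj i : (Fin m → ℝ) →L[ℝ] ℝ) := by
    ext w
    simp only [ContinuousLinearMap.sub_apply, ContinuousLinearMap.coe_sum',
      Finset.sum_apply, ContinuousLinearMap.add_apply, ContinuousLinearMap.smul_apply,
      ContinuousLinearMap.comp_apply, ContinuousLinearMap.proj_apply, smul_eq_mul]
    have hfd : fderiv ℝ f (g' ν) (fderiv ℝ g' ν w) = ∑ i, fderiv ℝ g' ν w i * ν i := by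
      rw [fderiv_apply_eq_dot, hr ν]; rfl
    rw [hfd, Finset.sum_add_distrib]
    have : ∑ i, ν i * fderiv ℝ g' ν w i = ∑ i, fderiv ℝ g' ν w i * ν i :=
      Finset.sum_congr rfl fun i _ => mul_comm _ _
    rw [this]
    ring
  rw [hDeq] at htot
  exact htot

lemma grad_of_hasFDerivAt_sum {u : (Fin m → ℝ) → ℝ} {g : (Fin m → ℝ) → (Fin m → ℝ)}
    {ν : Fin m → ℝ}
    (h : HasFDerivAt u (∑ i, g ν i • (ContinuousLinearMap.proj i :
      (Fin m → ℝ) →L[ℝ] ℝ)) ν) : grad u ν = g ν := by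
  funext i
  show fderiv ℝ u ν (Pi.single i 1) = g ν i
  rw [h.fderiv]
  simp only [ContinuousLinearMap.coe_sum', Finset.sum_apply,
    ContinuousLinearMap.smul_apply, ContinuousLinearMap.proj_apply, smul_eq_mul]
  rw [Finset.sum_eq_single i]
  · simp
  · intro b _ hb; simp [Pi.single_apply, hb]
  · intro h'; exact absurd (Finset.mem_univ i) h'


end Geo

open Geo

/-- The Legendre-linearized geodesic stays in the space `H_0^Γ`: for each
`t ∈ [0,1]`, `φ_t(y) - 2πy²` is smooth and `ℤ^m`-periodic and `Hess φ_t > 0`. -/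
theorem geodesic_stays_invariant {m : ℕ}
    (ψ₀ ψ₁ : (Fin m → ℝ) → ℝ)
    (hψ₀ : ContDiff ℝ (⊤ : ℕ∞) ψ₀) (hψ₁ : ContDiff ℝ (⊤ : ℕ∞) ψ₁)
    (hper₀ : ∀ (y : Fin m → ℝ) (n : Fin m → ℤ), ψ₀ (y + fun α => (n α : ℝ)) = ψ₀ y)
    (hper₁ : ∀ (y : Fin m → ℝ) (n : Fin m → ℤ), ψ₁ (y + fun α => (n α : ℝ)) = ψ₁ y)
    (φ₀ φ₁ u₀ u₁ : (Fin m → ℝ) → ℝ)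
    (hφ₀ : ∀ y, φ₀ y = 2 * π * (∑ α, (y α) ^ 2) + 4 * π * ψ₀ y)
    (hφ₁ : ∀ y, φ₁ y = 2 * π * (∑ α, (y α) ^ 2) + 4 * π * ψ₁ y)
    (hconv₀ : ∀ y, (hess φ₀ y).PosDef) (hconv₁ : ∀ y, (hess φ₁ y).PosDef)
    (hsurj₀ : Function.Surjective (grad φ₀)) (hsurj₁ : Function.Surjective (grad φ₁))
    (hleg₀ : ∀ y, u₀ (grad φ₀ y) = (∑ i, grad φ₀ y i * y i) - φ₀ y)
    (hleg₁ : ∀ y, u₁ (grad φ₁ y) = (∑ i, grad φ₁ y i * y i) - φ₁ y)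
    (φ : ℝ → (Fin m → ℝ) → ℝ)
    (hφ : ∀ t y, φ t y =
      ⨆ μ : Fin m → ℝ, ((∑ i, μ i * y i) - ((1 - t) * u₀ μ + t * u₁ μ))) :
    ∀ t ∈ Set.Icc (0:ℝ) 1,
      ContDiff ℝ (⊤ : ℕ∞) (fun y : Fin m → ℝ => φ t y - 2 * π * ∑ α, (y α) ^ 2) ∧
      (∀ (y : Fin m → ℝ) (n : Fin m → ℤ),
        φ t (y + fun α => (n α : ℝ)) - 2 * π * (∑ α, ((y + fun α => (n α : ℝ)) α) ^ 2)
          = φ t y - 2 * π * ∑ α, (y α) ^ 2) ∧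
      (∀ y, (hess (φ t) y).PosDef) := by
    classical
  intro t ht
  obtain ⟨ht0, ht1⟩ := ht
  have hπ : (0:ℝ) < π := Real.pi_pos
  -- smoothness of the quadratic part and of φ₀, φ₁
  have hsmQ : ContDiff ℝ (⊤ : ℕ∞) (fun y : Fin m → ℝ => ∑ α, (y α) ^ 2) :=
    ContDiff.sum fun α _ => (contDiff_apply ℝ ℝ α).pow 2
  have hsm0 : ContDiff ℝ (⊤ : ℕ∞) φ₀ := by
    rw [funext hφ₀]
    exact (contDiff_const.mul hsmQ).add (contDiff_const.mul hψ₀)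
  have hsm1 : ContDiff ℝ (⊤ : ℕ∞) φ₁ := by
    rw [funext hφ₁]
    exact (contDiff_const.mul hsmQ).add (contDiff_const.mul hψ₁)
  -- bijectivity of the gradient maps and their derivatives
  have hmat0 : ∀ x, (Matrix.of fun a b => fderiv ℝ (grad φ₀) x (Pi.single a 1) b)
      = hess φ₀ x := by
    intro x; ext a b; exact fderiv_grad_apply hsm0 x a b
  have hmat1 : ∀ x, (Matrix.of fun a b => fderiv ℝ (grad φ₁) x (Pi.single a 1) b)
      = hess φ₁ x := by
    intro x; ext a b; exact fderiv_grad_apply hsm1 x a b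
  have hdbij0 : ∀ x, Function.Bijective (fderiv ℝ (grad φ₀) x) := by
    intro x
    apply clm_bijective_of_posdef
    rw [hmat0 x]; exact hconv₀ x
  have hdbij1 : ∀ x, Function.Bijective (fderiv ℝ (grad φ₁) x) := by
    intro x
    apply clm_bijective_of_posdef
    rw [hmat1 x]; exact hconv₁ x
  obtain ⟨F', hF'sm, hF'l, hF'r⟩ := exists_smooth_inverse (contDiff_grad hsm0)
    (grad_injective hsm0 hconv₀) hsurj₀ hdbij0
  obtain ⟨G', hG'sm, hG'l, hG'r⟩ := exists_smooth_inverse (contDiff_grad hsm1)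
    (grad_injective hsm1 hconv₁) hsurj₁ hdbij1
  -- explicit gradient formulas and bounds
  obtain ⟨C₀, hC₀0, hC₀⟩ := grad_bounded hψ₀ hper₀
  obtain ⟨C₁, hC₁0, hC₁⟩ := grad_bounded hψ₁ hper₁
  have hgrad0 : ∀ y, grad φ₀ y = fun i => 4 * π * y i + 4 * π * grad ψ₀ y i := by
    intro y
    rw [grad_quad_add hψ₀ hφ₀ y]
    funext i; ring
  have hgrad1 : ∀ y, grad φ₁ y = fun i => 4 * π * y i + 4 * π * grad ψ₁ y i := by
    intro y
    rw [grad_quad_add hψ₁ hφ₁ y]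
    funext i; ring
  have hFb : ∀ μ, ‖F' μ - (4*π)⁻¹ • μ‖ ≤ C₀ := by
    intro μ
    have h1 : grad φ₀ (F' μ) = μ := hF'r μ
    have h2 : F' μ - (4*π)⁻¹ • μ = - grad ψ₀ (F' μ) := by
      funext i
      have h3 := congrFun (hgrad0 (F' μ)) i
      rw [h1] at h3
      simp only [Pi.sub_apply, Pi.smul_apply, smul_eq_mul, Pi.neg_apply]
      rw [h3]
      field_simp
      ring
    rw [h2, norm_neg]; exact hC₀ _
  have hGb : ∀ μ, ‖G' μ - (4*π)⁻¹ • μ‖ ≤ C₁ := by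
    intro μ
    have h1 : grad φ₁ (G' μ) = μ := hG'r μ
    have h2 : G' μ - (4*π)⁻¹ • μ = - grad ψ₁ (G' μ) := by
      funext i
      have h3 := congrFun (hgrad1 (G' μ)) i
      rw [h1] at h3
      simp only [Pi.sub_apply, Pi.smul_apply, smul_eq_mul, Pi.neg_apply]
      rw [h3]
      field_simp
      ring
    rw [h2, norm_neg]; exact hC₁ _
  -- the interpolated inverse-gradient map H
  set H : (Fin m → ℝ) → (Fin m → ℝ) := fun μ => (1 - t) • F' μ + t • G' μ with hHdef
  have hHsm : ContDiff ℝ (⊤ : ℕ∞) H := (hF'sm.const_smul (1-t)).add (hG'sm.const_smul t)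
  have hHapp : ∀ μ i, H μ i = (1-t) * F' μ i + t * G' μ i := by
    intro μ i; simp [hHdef]
  -- bound for H
  have hHb : ∀ μ, ‖μ‖ ≤ (4*π*(1+C₀+C₁)) * (‖H μ‖ + 1) := by
    intro μ
    have h1 : H μ - (4*π)⁻¹ • μ
        = (1-t) • (F' μ - (4*π)⁻¹ • μ) + t • (G' μ - (4*π)⁻¹ • μ) := by
      funext i
      simp only [hHdef, Pi.add_apply, Pi.sub_apply, Pi.smul_apply, smul_eq_mul]
      ring
    have h2 : ‖H μ - (4*π)⁻¹ • μ‖ ≤ C₀ + C₁ := by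
      rw [h1]
      refine le_trans (norm_add_le _ _) ?_
      rw [norm_smul, norm_smul, Real.norm_eq_abs, Real.norm_eq_abs,
        abs_of_nonneg (by linarith), abs_of_nonneg ht0]
      have hb1 := hFb μ
      have hb2 := hGb μ
      nlinarith
    have h3 : ‖(4*π)⁻¹ • μ‖ = (4*π)⁻¹ * ‖μ‖ := by
      rw [norm_smul, Real.norm_eq_abs, abs_of_pos (by positivity)]
    have h4 : (4*π)⁻¹ * ‖μ‖ ≤ ‖H μ‖ + (C₀ + C₁) := by
      have h5 : ‖(4*π)⁻¹ • μ‖ ≤ ‖H μ‖ + ‖(4*π)⁻¹ • μ - H μ‖ := norm_le_insert' _ _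
      rw [norm_sub_rev] at h5
      rw [h3] at h5
      linarith
    have h6 : 0 < 4*π := by positivity
    have h7 := mul_le_mul_of_nonneg_left h4 h6.le
    have h8 : (4*π) * ((4*π)⁻¹ * ‖μ‖) = ‖μ‖ := by field_simp
    rw [h8] at h7
    have h9 : 4*π*(‖H μ‖+(C₀+C₁)) ≤ 4*π*(1+C₀+C₁)*(‖H μ‖+1) := by
      nlinarith [mul_nonneg (mul_nonneg (by linarith : (0:ℝ) ≤ 4*π)
        (add_nonneg hC₀0 hC₁0)) (norm_nonneg (H μ)), hπ]
    linarith
  -- injectivity of H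
  have hHinj : Function.Injective H := by
    intro μ ν hHμν
    by_contra hne
    have hFne : F' μ ≠ F' ν := fun hc => hne (by rw [← hF'r μ, ← hF'r ν, hc])
    have hGne : G' μ ≠ G' ν := fun hc => hne (by rw [← hG'r μ, ← hG'r ν, hc])
    have hmF : 0 < dot (μ - ν) (F' μ - F' ν) := by
      have h := grad_strictMono hsm0 hconv₀ (y := F' ν) (z := F' μ) hFne.symm
      rw [hF'r, hF'r] at h
      exact h
    have hmG : 0 < dot (μ - ν) (G' μ - G' ν) := by
      have h := grad_strictMono hsm1 hconv₁ (y := G' ν) (z := G' μ) hGne.symm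
      rw [hG'r, hG'r] at h
      exact h
    have hz : dot (μ - ν) (H μ - H ν) = 0 := by
      rw [hHμν, sub_self]
      simp [dot]
    have hcomb : dot (μ - ν) (H μ - H ν)
        = (1-t) * dot (μ - ν) (F' μ - F' ν) + t * dot (μ - ν) (G' μ - G' ν) := by
      simp only [dot, Finset.mul_sum, ← Finset.sum_add_distrib]
      refine Finset.sum_congr rfl fun i _ => ?_
      simp only [Pi.sub_apply, hHapp]
      ring
    rw [hcomb] at hz
    have := comb_pos ht0 ht1 hmF hmG
    linarith
  -- positive definiteness of the derivative of H
  have hF'diff : ∀ μ, DifferentiableAt ℝ F' μ := fun μ => hF'sm.differentiable (by simp) μ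
  have hG'diff : ∀ μ, DifferentiableAt ℝ G' μ := fun μ => hG'sm.differentiable (by simp) μ
  have hcompF : ∀ μ, (fderiv ℝ (grad φ₀) (F' μ)).comp (fderiv ℝ F' μ)
      = ContinuousLinearMap.id ℝ (Fin m → ℝ) := by
    intro μ
    have hgd : DifferentiableAt ℝ (grad φ₀) (F' μ) :=
      (contDiff_grad hsm0).differentiable (by simp) _
    have hc : HasFDerivAt (grad φ₀ ∘ F')
        ((fderiv ℝ (grad φ₀) (F' μ)).comp (fderiv ℝ F' μ)) μ :=
      hgd.hasFDerivAt.comp μ (hF'diff μ).hasFDerivAt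
    have hid : (grad φ₀) ∘ F' = id := funext hF'r
    rw [hid] at hc
    exact hc.unique (hasFDerivAt_id μ)
  have hcompF' : ∀ μ, (fderiv ℝ F' μ).comp (fderiv ℝ (grad φ₀) (F' μ))
      = ContinuousLinearMap.id ℝ (Fin m → ℝ) := by
    intro μ
    have hgd : DifferentiableAt ℝ (grad φ₀) (F' μ) :=
      (contDiff_grad hsm0).differentiable (by simp) _
    have hc : HasFDerivAt (F' ∘ grad φ₀)
        ((fderiv ℝ F' (grad φ₀ (F' μ))).comp (fderiv ℝ (grad φ₀) (F' μ))) (F' μ) :=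
      (hF'diff (grad φ₀ (F' μ))).hasFDerivAt.comp (F' μ) hgd.hasFDerivAt
    have hid : F' ∘ grad φ₀ = id := funext hF'l
    rw [hid] at hc
    rw [hF'r μ] at hc
    exact hc.unique (hasFDerivAt_id (F' μ))
  have hcompG : ∀ μ, (fderiv ℝ (grad φ₁) (G' μ)).comp (fderiv ℝ G' μ)
      = ContinuousLinearMap.id ℝ (Fin m → ℝ) := by
    intro μ
    have hgd : DifferentiableAt ℝ (grad φ₁) (G' μ) :=
      (contDiff_grad hsm1).differentiable (by simp) _
    have hc : HasFDerivAt (grad φ₁ ∘ G')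
        ((fderiv ℝ (grad φ₁) (G' μ)).comp (fderiv ℝ G' μ)) μ :=
      hgd.hasFDerivAt.comp μ (hG'diff μ).hasFDerivAt
    have hid : (grad φ₁) ∘ G' = id := funext hG'r
    rw [hid] at hc
    exact hc.unique (hasFDerivAt_id μ)
  have hcompG' : ∀ μ, (fderiv ℝ G' μ).comp (fderiv ℝ (grad φ₁) (G' μ))
      = ContinuousLinearMap.id ℝ (Fin m → ℝ) := by
    intro μ
    have hgd : DifferentiableAt ℝ (grad φ₁) (G' μ) :=
      (contDiff_grad hsm1).differentiable (by simp) _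
    have hc : HasFDerivAt (G' ∘ grad φ₁)
        ((fderiv ℝ G' (grad φ₁ (G' μ))).comp (fderiv ℝ (grad φ₁) (G' μ))) (G' μ) :=
      (hG'diff (grad φ₁ (G' μ))).hasFDerivAt.comp (G' μ) hgd.hasFDerivAt
    have hid : G' ∘ grad φ₁ = id := funext hG'l
    rw [hid] at hc
    rw [hG'r μ] at hc
    exact hc.unique (hasFDerivAt_id (G' μ))
  have hposF' : ∀ μ, (Matrix.of fun a b => fderiv ℝ F' μ (Pi.single a 1) b).PosDef := by
    intro μ
    have h1 := matrix_of_comp (hcompF' μ)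
    rw [hmat0 (F' μ)] at h1
    exact posdef_of_mul_eq_one (hconv₀ (F' μ)) h1
  have hposG' : ∀ μ, (Matrix.of fun a b => fderiv ℝ G' μ (Pi.single a 1) b).PosDef := by
    intro μ
    have h1 := matrix_of_comp (hcompG' μ)
    rw [hmat1 (G' μ)] at h1
    exact posdef_of_mul_eq_one (hconv₁ (G' μ)) h1
  have hHd : ∀ μ, HasFDerivAt H ((1-t) • fderiv ℝ F' μ + t • fderiv ℝ G' μ) μ := by
    intro μ
    exact ((hF'diff μ).hasFDerivAt.const_smul (1-t)).add
      ((hG'diff μ).hasFDerivAt.const_smul t)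
  have hHmatpos : ∀ μ, (Matrix.of fun a b => fderiv ℝ H μ (Pi.single a 1) b).PosDef := by
    intro μ
    have heq : (Matrix.of fun a b => fderiv ℝ H μ (Pi.single a 1) b)
        = Matrix.of fun a b => (1-t) * (Matrix.of fun a b => fderiv ℝ F' μ (Pi.single a 1) b) a b
          + t * (Matrix.of fun a b => fderiv ℝ G' μ (Pi.single a 1) b) a b := by
      ext a b
      rw [(hHd μ).fderiv]
      simp [ContinuousLinearMap.add_apply, ContinuousLinearMap.smul_apply]
    rw [heq]
    exact posdef_comb (hposF' μ) (hposG' μ) ht0 ht1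
  have hHdbij : ∀ μ, Function.Bijective (fderiv ℝ H μ) :=
    fun μ => clm_bijective_of_posdef (hHmatpos μ)
  have hHsurj : Function.Surjective H := by
    refine surjective_of_bound hHsm.continuous (isOpenMap_of_fderiv_bijective hHsm hHdbij)
      (C := 4*π*(1+C₀+C₁)) (by positivity) hHb
  obtain ⟨M, hMsm, hMl, hMr⟩ := exists_smooth_inverse hHsm hHinj hHsurj hHdbij
  -- the Legendre transforms are smooth
  have hu0 : ∀ μ, u₀ μ = (∑ i, μ i * F' μ i) - φ₀ (F' μ) := by
    intro μ
    obtain ⟨x, rfl⟩ := hsurj₀ μ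
    rw [hleg₀ x, hF'l x]
  have hu1 : ∀ μ, u₁ μ = (∑ i, μ i * G' μ i) - φ₁ (G' μ) := by
    intro μ
    obtain ⟨x, rfl⟩ := hsurj₁ μ
    rw [hleg₁ x, hG'l x]
  -- Fenchel inequalities for the Legendre transforms
  have hfen0 : ∀ μ ν, dot (F' ν) (μ - ν) + u₀ ν ≤ u₀ μ := by
    intro μ ν
    by_cases hmn : μ = ν
    · subst hmn; simp [dot]
    · have hFne : F' μ ≠ F' ν := fun hc => hmn (by rw [← hF'r μ, ← hF'r ν, hc])
      have hfs := fenchel_strict hsm0 hconv₀ (y := F' μ) (z := F' ν) hFne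
      rw [hF'r μ] at hfs
      rw [hu0 μ, hu0 ν]
      have d1 : dot (F' ν) (μ - ν) = dot (F' ν) μ - dot (F' ν) ν := dot_sub_right _ _ _
      have d2 : dot μ (F' ν - F' μ) = dot μ (F' ν) - dot μ (F' μ) := dot_sub_right _ _ _
      have d3 : dot (F' ν) μ = dot μ (F' ν) := dot_comm _ _
      have d4 : dot (F' ν) ν = dot ν (F' ν) := dot_comm _ _
      have e1 : (∑ i, μ i * F' μ i) = dot μ (F' μ) := rfl
      have e2 : (∑ i, ν i * F' ν i) = dot ν (F' ν) := rfl
      rw [e1, e2]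
      linarith
  have hfen1 : ∀ μ ν, dot (G' ν) (μ - ν) + u₁ ν ≤ u₁ μ := by
    intro μ ν
    by_cases hmn : μ = ν
    · subst hmn; simp [dot]
    · have hGne : G' μ ≠ G' ν := fun hc => hmn (by rw [← hG'r μ, ← hG'r ν, hc])
      have hfs := fenchel_strict hsm1 hconv₁ (y := G' μ) (z := G' ν) hGne
      rw [hG'r μ] at hfs
      rw [hu1 μ, hu1 ν]
      have d1 : dot (G' ν) (μ - ν) = dot (G' ν) μ - dot (G' ν) ν := dot_sub_right _ _ _
      have d2 : dot μ (G' ν - G' μ) = dot μ (G' ν) - dot μ (G' μ) := dot_sub_right _ _ _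
      have d3 : dot (G' ν) μ = dot μ (G' ν) := dot_comm _ _
      have d4 : dot (G' ν) ν = dot ν (G' ν) := dot_comm _ _
      have e1 : (∑ i, μ i * G' μ i) = dot μ (G' μ) := rfl
      have e2 : (∑ i, ν i * G' ν i) = dot ν (G' ν) := rfl
      rw [e1, e2]
      linarith
  -- the supremum is attained at M y
  have hub : ∀ y μ, (∑ i, μ i * y i) - ((1 - t) * u₀ μ + t * u₁ μ)
      ≤ dot (M y) y - ((1 - t) * u₀ (M y) + t * u₁ (M y)) := by
    intro y μ
    have hf0 := hfen0 μ (M y)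
    have hf1 := hfen1 μ (M y)
    have hHM : H (M y) = y := hMr y
    have hq : (1-t) * dot (F' (M y)) (μ - M y) + t * dot (G' (M y)) (μ - M y)
        = dot y (μ - M y) := by
      have hgen : ∀ z w, dot (H z) w = (1-t) * dot (F' z) w + t * dot (G' z) w := by
        intro z w
        simp only [dot, Finset.mul_sum, ← Finset.sum_add_distrib]
        refine Finset.sum_congr rfl fun i _ => ?_
        rw [hHapp]
        ring
      rw [← hgen (M y) (μ - M y), hHM]
    have e5 : dot y (μ - M y) = dot μ y - dot (M y) y := by
      rw [dot_sub_right, dot_comm y μ, dot_comm y (M y)]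
    have e6 : (∑ i, μ i * y i) = dot μ y := rfl
    rw [e6]
    have s0 := mul_le_mul_of_nonneg_left hf0 (by linarith : (0:ℝ) ≤ 1 - t)
    have s1 := mul_le_mul_of_nonneg_left hf1 ht0
    nlinarith [s0, s1]
  have hkey : ∀ y, φ t y = dot (M y) y - ((1 - t) * u₀ (M y) + t * u₁ (M y)) := by
    intro y
    rw [hφ t y]
    apply le_antisymm
    · exact ciSup_le fun μ => hub y μ
    · have hbdd : BddAbove (Set.range fun μ : Fin m → ℝ =>
          (∑ i, μ i * y i) - ((1 - t) * u₀ μ + t * u₁ μ)) := by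
        refine ⟨dot (M y) y - ((1 - t) * u₀ (M y) + t * u₁ (M y)), ?_⟩
        rintro z ⟨μ, rfl⟩
        exact hub y μ
      exact le_ciSup hbdd (M y)
  -- the interpolated potential u_t, as a smooth function
  set U : (Fin m → ℝ) → ℝ := fun ν => (1 - t) * ((∑ i, ν i * F' ν i) - φ₀ (F' ν))
      + t * ((∑ i, ν i * G' ν i) - φ₁ (G' ν)) with hUdef
  have hUu : ∀ ν, U ν = (1 - t) * u₀ ν + t * u₁ ν := by
    intro ν; rw [hUdef, hu0 ν, hu1 ν]
  have hUsm : ContDiff ℝ (⊤ : ℕ∞) U := by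
    apply ContDiff.add
    · apply ContDiff.mul contDiff_const
      apply ContDiff.sub
      · exact ContDiff.sum fun i _ => (contDiff_apply ℝ ℝ i).mul (contDiff_pi.1 hF'sm i)
      · exact hsm0.comp hF'sm
    · apply ContDiff.mul contDiff_const
      apply ContDiff.sub
      · exact ContDiff.sum fun i _ => (contDiff_apply ℝ ℝ i).mul (contDiff_pi.1 hG'sm i)
      · exact hsm1.comp hG'sm
  -- derivative of U
  have hU0' : ∀ ν, HasFDerivAt (fun ν : Fin m → ℝ => (∑ i, ν i * F' ν i) - φ₀ (F' ν))
      (∑ i, F' ν i • (ContinuousLinearMap.proj i : (Fin m → ℝ) →L[ℝ] ℝ)) ν :=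
    fun ν => hasFDerivAt_legendre hsm0 hF'sm hF'r ν
  have hU1' : ∀ ν, HasFDerivAt (fun ν : Fin m → ℝ => (∑ i, ν i * G' ν i) - φ₁ (G' ν))
      (∑ i, G' ν i • (ContinuousLinearMap.proj i : (Fin m → ℝ) →L[ℝ] ℝ)) ν :=
    fun ν => hasFDerivAt_legendre hsm1 hG'sm hG'r ν
  have hU' : ∀ ν, HasFDerivAt U
      (∑ i, H ν i • (ContinuousLinearMap.proj i : (Fin m → ℝ) →L[ℝ] ℝ)) ν := by
    intro ν
    have h1 := ((hU0' ν).const_mul (1-t)).add ((hU1' ν).const_mul t)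
    have h2 : (1-t) • (∑ i, F' ν i • (ContinuousLinearMap.proj i : (Fin m → ℝ) →L[ℝ] ℝ))
        + t • (∑ i, G' ν i • (ContinuousLinearMap.proj i : (Fin m → ℝ) →L[ℝ] ℝ))
        = ∑ i, H ν i • (ContinuousLinearMap.proj i : (Fin m → ℝ) →L[ℝ] ℝ) := by
      rw [Finset.smul_sum, Finset.smul_sum, ← Finset.sum_add_distrib]
      refine Finset.sum_congr rfl fun i _ => ?_
      rw [smul_smul, smul_smul, ← add_smul, hHapp]
    rw [← h2]
    exact h1
  have hgradU : ∀ ν, grad U ν = H ν := fun ν => grad_of_hasFDerivAt_sum (hU' ν)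
  -- φ t agrees with the smooth function Φ
  set Φ : (Fin m → ℝ) → ℝ := fun y => (∑ i, y i * M y i) - U (M y) with hΦdef
  have hφteq : φ t = Φ := by
    funext y
    have e1 : (∑ i, y i * M y i) = dot (M y) y :=
      Finset.sum_congr rfl fun i _ => mul_comm _ _
    calc φ t y = dot (M y) y - ((1 - t) * u₀ (M y) + t * u₁ (M y)) := hkey y
      _ = (∑ i, y i * M y i) - U (M y) := by rw [e1, hUu (M y)]
  have hΦsm : ContDiff ℝ (⊤ : ℕ∞) Φ := by
    apply ContDiff.sub
    · exact ContDiff.sum fun i _ => (contDiff_apply ℝ ℝ i).mul (contDiff_pi.1 hMsm i)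
    · exact hUsm.comp hMsm
  -- derivative of Φ (Legendre again, with f = U, g' = M)
  have hgradUM : ∀ y, grad U (M y) = y := by
    intro y; rw [hgradU (M y), hMr y]
  have hΦ' : ∀ y, HasFDerivAt Φ
      (∑ i, M y i • (ContinuousLinearMap.proj i : (Fin m → ℝ) →L[ℝ] ℝ)) y :=
    fun y => hasFDerivAt_legendre hUsm hMsm hgradUM y
  have hφt' : ∀ y, HasFDerivAt (φ t)
      (∑ i, M y i • (ContinuousLinearMap.proj i : (Fin m → ℝ) →L[ℝ] ℝ)) y := by
    intro y; rw [hφteq]; exact hΦ' y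
  have hgradφt : ∀ y, grad (φ t) y = M y := fun y => grad_of_hasFDerivAt_sum (hφt' y)
  -- Conclusion 1 : smoothness
  refine ⟨?_, ?_, ?_⟩
  · have heq : (fun y : Fin m → ℝ => φ t y - 2 * π * ∑ α, (y α) ^ 2)
        = fun y => Φ y - 2 * π * ∑ α, (y α) ^ 2 := by
      funext y; rw [hφteq]
    rw [heq]
    exact hΦsm.sub (contDiff_const.mul hsmQ)
  -- Conclusion 2 : periodicity
  · intro y n
    set nr : Fin m → ℝ := fun α => ((n α : ℝ)) with hnr
    have f1 : ∀ x, grad φ₀ (x + nr) = grad φ₀ x + (4*π) • nr := by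
      intro x
      funext i
      have hp : grad ψ₀ (x + nr) = grad ψ₀ x := grad_periodic hψ₀ hper₀ x n
      simp only [hgrad0, hp, Pi.add_apply, Pi.smul_apply, smul_eq_mul]
      ring
    have g1 : ∀ x, grad φ₁ (x + nr) = grad φ₁ x + (4*π) • nr := by
      intro x
      funext i
      have hp : grad ψ₁ (x + nr) = grad ψ₁ x := grad_periodic hψ₁ hper₁ x n
      simp only [hgrad1, hp, Pi.add_apply, Pi.smul_apply, smul_eq_mul]
      ring
    have f2 : ∀ μ, F' (μ + (4*π) • nr) = F' μ + nr := by
      intro μ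
      have h1 : grad φ₀ (F' μ + nr) = μ + (4*π) • nr := by
        rw [f1 (F' μ), hF'r μ]
      rw [← h1]
      exact hF'l _
    have g2 : ∀ μ, G' (μ + (4*π) • nr) = G' μ + nr := by
      intro μ
      have h1 : grad φ₁ (G' μ + nr) = μ + (4*π) • nr := by
        rw [g1 (G' μ), hG'r μ]
      rw [← h1]
      exact hG'l _
    have f4 : ∀ μ, H (μ + (4*π) • nr) = H μ + nr := by
      intro μ
      funext i
      rw [hHapp, f2, g2]
      simp only [Pi.add_apply, hHapp]
      ring
    have f5 : M (y + nr) = M y + (4*π) • nr := by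
      have h1 : H (M y + (4*π) • nr) = y + nr := by
        rw [f4 (M y), hMr y]
      rw [← h1]
      exact hMl _
    have hqgen : ∀ x : Fin m → ℝ,
        (∑ α, ((x + nr) α) ^ 2) = (∑ α, (x α) ^ 2) + 2 * dot x nr + dot nr nr := by
      intro x
      have hterm : ∀ α, ((x + nr) α) ^ 2 = (x α) ^ 2 + 2 * (x α * nr α) + nr α * nr α := by
        intro α; simp only [Pi.add_apply]; ring
      calc (∑ α, ((x + nr) α) ^ 2)
          = ∑ α, ((x α) ^ 2 + 2 * (x α * nr α) + nr α * nr α) :=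
            Finset.sum_congr rfl fun α _ => hterm α
        _ = (∑ α, (x α) ^ 2) + 2 * (∑ α, x α * nr α) + ∑ α, nr α * nr α := by
            rw [Finset.sum_add_distrib, Finset.sum_add_distrib, ← Finset.mul_sum]
        _ = _ := rfl
    have f6 : ∀ x, φ₀ (x + nr) = φ₀ x + 4*π*dot x nr + 2*π*dot nr nr := by
      intro x
      rw [hφ₀ (x + nr), hφ₀ x]
      have hpp : ψ₀ (x + nr) = ψ₀ x := hper₀ x n
      rw [hpp, hqgen x]
      ring
    have g6 : ∀ x, φ₁ (x + nr) = φ₁ x + 4*π*dot x nr + 2*π*dot nr nr := by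
      intro x
      rw [hφ₁ (x + nr), hφ₁ x]
      have hpp : ψ₁ (x + nr) = ψ₁ x := hper₁ x n
      rw [hpp, hqgen x]
      ring
    have f7 : ∀ μ, u₀ (μ + (4*π) • nr) = u₀ μ + dot μ nr + 2*π*dot nr nr := by
      intro μ
      rw [hu0 (μ + (4*π) • nr), hu0 μ, f2 μ, f6 (F' μ)]
      have e : (∑ i, (μ + (4*π) • nr) i * (F' μ + nr) i)
          = (∑ i, μ i * F' μ i) + dot μ nr + 4*π*dot nr (F' μ) + 4*π*dot nr nr := by
        have hterm : ∀ i, (μ + (4*π) • nr) i * (F' μ + nr) i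
            = μ i * F' μ i + μ i * nr i + 4*π*(nr i * F' μ i) + 4*π*(nr i * nr i) := by
          intro i; simp only [Pi.add_apply, Pi.smul_apply, smul_eq_mul]; ring
        calc (∑ i, (μ + (4*π) • nr) i * (F' μ + nr) i)
            = ∑ i, (μ i * F' μ i + μ i * nr i + 4*π*(nr i * F' μ i) + 4*π*(nr i * nr i)) :=
              Finset.sum_congr rfl fun i _ => hterm i
          _ = (∑ i, μ i * F' μ i) + (∑ i, μ i * nr i) + 4*π*(∑ i, nr i * F' μ i)
              + 4*π*(∑ i, nr i * nr i) := by
              rw [Finset.sum_add_distrib, Finset.sum_add_distrib, Finset.sum_add_distrib,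
                ← Finset.mul_sum, ← Finset.mul_sum]
          _ = _ := rfl
      rw [e]
      have hc : dot nr (F' μ) = dot (F' μ) nr := dot_comm _ _
      linear_combination (4*π) * hc
    have g7 : ∀ μ, u₁ (μ + (4*π) • nr) = u₁ μ + dot μ nr + 2*π*dot nr nr := by
      intro μ
      rw [hu1 (μ + (4*π) • nr), hu1 μ, g2 μ, g6 (G' μ)]
      have e : (∑ i, (μ + (4*π) • nr) i * (G' μ + nr) i)
          = (∑ i, μ i * G' μ i) + dot μ nr + 4*π*dot nr (G' μ) + 4*π*dot nr nr := by
        have hterm : ∀ i, (μ + (4*π) • nr) i * (G' μ + nr) i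
            = μ i * G' μ i + μ i * nr i + 4*π*(nr i * G' μ i) + 4*π*(nr i * nr i) := by
          intro i; simp only [Pi.add_apply, Pi.smul_apply, smul_eq_mul]; ring
        calc (∑ i, (μ + (4*π) • nr) i * (G' μ + nr) i)
            = ∑ i, (μ i * G' μ i + μ i * nr i + 4*π*(nr i * G' μ i) + 4*π*(nr i * nr i)) :=
              Finset.sum_congr rfl fun i _ => hterm i
          _ = (∑ i, μ i * G' μ i) + (∑ i, μ i * nr i) + 4*π*(∑ i, nr i * G' μ i)
              + 4*π*(∑ i, nr i * nr i) := by
              rw [Finset.sum_add_distrib, Finset.sum_add_distrib, Finset.sum_add_distrib,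
                ← Finset.mul_sum, ← Finset.mul_sum]
          _ = _ := rfl
      rw [e]
      have hc : dot nr (G' μ) = dot (G' μ) nr := dot_comm _ _
      linear_combination (4*π) * hc
    have e3 : dot (M y + (4*π) • nr) (y + nr)
        = dot (M y) y + dot (M y) nr + 4*π*(dot nr y) + 4*π*(dot nr nr) := by
      have hterm : ∀ i, (M y + (4*π) • nr) i * (y + nr) i
          = M y i * y i + M y i * nr i + 4*π*(nr i * y i) + 4*π*(nr i * nr i) := by
        intro i; simp only [Pi.add_apply, Pi.smul_apply, smul_eq_mul]; ring
      calc dot (M y + (4*π) • nr) (y + nr)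
          = ∑ i, (M y i * y i + M y i * nr i + 4*π*(nr i * y i) + 4*π*(nr i * nr i)) :=
            Finset.sum_congr rfl fun i _ => hterm i
        _ = (∑ i, M y i * y i) + (∑ i, M y i * nr i) + 4*π*(∑ i, nr i * y i)
            + 4*π*(∑ i, nr i * nr i) := by
            rw [Finset.sum_add_distrib, Finset.sum_add_distrib, Finset.sum_add_distrib,
              ← Finset.mul_sum, ← Finset.mul_sum]
        _ = _ := rfl
    have hfinal := hkey (y + nr)
    rw [f5, e3, f7 (M y), g7 (M y)] at hfinal
    rw [hfinal, hkey y, hqgen y]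
    have hc1 : dot nr y = dot y nr := dot_comm _ _
    linear_combination (4*π) * hc1
  -- Conclusion 3 : positive-definiteness of the Hessian
  · intro y
    have hMd : DifferentiableAt ℝ M y := hMsm.differentiable (by simp) y
    have hessEq : hess (φ t) y = Matrix.of fun a b => fderiv ℝ M y (Pi.single a 1) b := by
      ext a b
      show fderiv ℝ (fun v => fderiv ℝ (φ t) v (Pi.single b 1)) y (Pi.single a 1) = _
      have h1 : (fun v => fderiv ℝ (φ t) v (Pi.single b 1)) = fun v => M v b := by
        funext v
        rw [(hφt' v).fderiv]
        simp only [ContinuousLinearMap.coe_sum', Finset.sum_apply,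
          ContinuousLinearMap.smul_apply, ContinuousLinearMap.proj_apply, smul_eq_mul]
        rw [Finset.sum_eq_single b]
        · simp
        · intro c _ hc; simp [Pi.single_apply, hc]
        · intro h'; exact absurd (Finset.mem_univ b) h'
      rw [h1]
      have h2 : HasFDerivAt (fun v => M v b)
          ((ContinuousLinearMap.proj b).comp (fderiv ℝ M y)) y := by
        exact (ContinuousLinearMap.proj b).hasFDerivAt.comp y hMd.hasFDerivAt
      rw [h2.fderiv]
      rfl
    -- chain-rule identities for M and H
    have hHMd : DifferentiableAt ℝ H (M y) := hHsm.differentiable (by simp) _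
    have hcomp1 : (fderiv ℝ H (M y)).comp (fderiv ℝ M y)
        = ContinuousLinearMap.id ℝ (Fin m → ℝ) := by
      have hc : HasFDerivAt (H ∘ M) ((fderiv ℝ H (M y)).comp (fderiv ℝ M y)) y :=
        hHMd.hasFDerivAt.comp y hMd.hasFDerivAt
      have hid : H ∘ M = id := funext hMr
      rw [hid] at hc
      exact hc.unique (hasFDerivAt_id y)
    have hcomp2 : (fderiv ℝ M y).comp (fderiv ℝ H (M y))
        = ContinuousLinearMap.id ℝ (Fin m → ℝ) := by
      have hc : HasFDerivAt (M ∘ H) ((fderiv ℝ M (H (M y))).comp (fderiv ℝ H (M y))) (M y) :=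
        (hMsm.differentiable (by simp) (H (M y))).hasFDerivAt.comp (M y) hHMd.hasFDerivAt
      have hid : M ∘ H = id := funext hMl
      rw [hid] at hc
      rw [hMr y] at hc
      exact hc.unique (hasFDerivAt_id (M y))
    have hAB := matrix_of_comp hcomp2
    rw [hessEq]
    exact posdef_of_mul_eq_one (hHmatpos (M y)) hAB
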